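/- arXiv:1808.09066 — 8 statements merged into one kernel-verified Lean document; each statement's English description precedes it below -/
import Mathlib

section
/- Let A be an n×n symmetric positive semidefinite matrix and P an n×n orthogonal projection matrix (P = Pᵀ = P²). Then |trace((I + A)⁻¹) − trace((I + P A P)⁻¹)| ≤ trace(A − P A P). -/
/-!
Write `M = 1 + A`, `N = 1 + PAP` and `Q = 1 - P`, so that `M - N = A - PAP` and
`tr (A - PAP) = tr (QAQ)`. Both inequalities come from the first-order convexity of `X ↦ tr X⁻¹`,
`tr X⁻¹ - tr Y⁻¹ ≤ tr (X⁻¹ (Y - X) X⁻¹)`, which is the trace of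
`(X⁻¹ - Y⁻¹) Y (X⁻¹ - Y⁻¹) ≥ 0`.

For `X = N`: since `NQ = QN = Q`, conjugating `A - PAP = QA + PAQ` by `N⁻¹` does not change its
trace. For `X = M`: writing `A - PAP = QA + AQ - QAQ`, the two cross terms contribute
`2 tr (Q M⁻¹AM⁻¹) ≥ 0`, and `tr (M⁻¹ QAQ M⁻¹) ≤ tr (QAQ)` because `M⁻¹` is a contraction.
-/

open Matrix

namespace Matrix

variable {m : Type*} [Fintype m]

section RCLike

open scoped ComplexOrder

variable {𝕜 : Type*} [RCLike 𝕜]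

theorem PosSemidef.mul_mul_of_isHermitian {A B : Matrix m m 𝕜} (hA : A.PosSemidef)
    (hB : B.IsHermitian) : (B * A * B).PosSemidef := by
  simpa only [hB.eq] using hA.mul_mul_conjTranspose_same B

variable [DecidableEq m]

open scoped MatrixOrder in
theorem PosSemidef.trace_mul_nonneg {S T : Matrix m m 𝕜} (hS : S.PosSemidef)
    (hT : T.PosSemidef) : 0 ≤ (S * T).trace := by
  obtain ⟨R, rfl⟩ := CStarAlgebra.nonneg_iff_eq_star_mul_self.mp hS.nonneg
  rw [star_eq_conjTranspose, Matrix.mul_assoc, trace_mul_comm]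
  exact (hT.mul_mul_conjTranspose_same R).trace_nonneg

theorem posSemidef_one_sub_of_isHermitian_of_mul_self {P : Matrix m m 𝕜} (hP : P.IsHermitian)
    (hPP : P * P = P) : (1 - P).PosSemidef := by
  have h : (1 - P)ᴴ * (1 - P) = 1 - P := by
    simp only [conjTranspose_sub, conjTranspose_one, hP.eq, sub_mul, mul_sub, Matrix.one_mul,
      Matrix.mul_one, hPP, sub_self, sub_zero]
  exact h ▸ posSemidef_conjTranspose_mul_self (1 - P)

end RCLike

theorem trace_mul_mul_eq_of_mul_eq {R : Type*} [CommSemiring R] {K Q : Matrix m m R}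
    (hKQ : K * Q = Q) (hQK : Q * K = Q) (Y Z : Matrix m m R) :
    (K * (Q * Y + Z * Q) * K).trace = (Q * Y + Z * Q).trace := by
  have hY : (K * (Q * Y) * K).trace = (Q * Y).trace := by
    rw [trace_mul_cycle, Matrix.mul_assoc, ← Matrix.mul_assoc K Q, hKQ, ← Matrix.mul_assoc, hKQ]
  have hZ : (K * (Z * Q) * K).trace = (Z * Q).trace := calc
    (K * (Z * Q) * K).trace = (Q * K * (K * Z)).trace := by
      rw [trace_mul_comm (Q * K)]; simp only [Matrix.mul_assoc]
    _ = (Z * Q).trace := by rw [hQK, ← Matrix.mul_assoc, hQK, trace_mul_comm]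
  rw [mul_add, add_mul, trace_add, trace_add, hY, hZ]

variable [DecidableEq m]

section CommRing

variable {R : Type*} [CommRing R] {A P : Matrix m m R}

theorem one_add_mul_mul_mul_one_sub (hPP : P * P = P) :
    (1 + P * A * P) * (1 - P) = 1 - P := by
  simp only [add_mul, Matrix.one_mul, mul_sub, Matrix.mul_one, Matrix.mul_assoc, hPP]
  abel

theorem one_sub_mul_one_add_mul_mul (hPP : P * P = P) :
    (1 - P) * (1 + P * A * P) = 1 - P := by
  simp only [mul_add, Matrix.mul_one, sub_mul, Matrix.one_mul, ← Matrix.mul_assoc, hPP, sub_self,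
    add_zero]

theorem trace_one_sub_mul_mul_one_sub (hPP : P * P = P) :
    ((1 - P) * A * (1 - P)).trace = (A - P * A * P).trace := by
  have hPAP : (P * A * P).trace = (P * A).trace := by rw [trace_mul_cycle, hPP]
  have hAP : (A * P).trace = (P * A).trace := trace_mul_comm A P
  simp only [sub_mul, mul_sub, Matrix.one_mul, Matrix.mul_one, trace_sub]
  rw [hPAP, hAP]
  abel

end CommRing

/-- `X` may be singular, with the convention `X⁻¹ = 0`. -/
theorem trace_inv_sub_trace_inv_le {X Y : Matrix m m ℝ} (hX : X.IsHermitian) (hY : Y.PosDef) :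
    X⁻¹.trace - Y⁻¹.trace ≤ (X⁻¹ * (Y - X) * X⁻¹).trace := by
  have hu : IsUnit Y.det := (isUnit_iff_isUnit_det Y).mp hY.isUnit
  have hXX : X⁻¹ * (X * X⁻¹) = X⁻¹ := by
    rcases nonsing_inv_cancel_or_zero X with ⟨-, h⟩ | h <;> simp [h]
  have hD : ((X⁻¹ - Y⁻¹) * Y * (X⁻¹ - Y⁻¹)).PosSemidef :=
    hY.posSemidef.mul_mul_of_isHermitian (hX.inv.sub hY.isHermitian.inv)
  have hexp : (X⁻¹ - Y⁻¹) * Y * (X⁻¹ - Y⁻¹) = X⁻¹ * (Y - X) * X⁻¹ - (X⁻¹ - Y⁻¹) := by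
    simp only [sub_mul, mul_sub, Matrix.mul_assoc, mul_nonsing_inv _ hu,
      nonsing_inv_mul_cancel_left _ _ hu, Matrix.mul_one, hXX]
  have := hD.trace_nonneg
  rw [hexp, trace_sub, trace_sub] at this
  linarith

theorem trace_mul_mul_le_trace {X K : Matrix m m ℝ} (hX : X.PosSemidef)
    (hK : (1 - K * K).PosSemidef) : (K * X * K).trace ≤ X.trace := by
  have := hX.trace_mul_nonneg hK
  rwa [mul_sub, Matrix.mul_one, trace_sub, sub_nonneg, ← Matrix.mul_assoc, trace_mul_cycle] at this

variable {A P : Matrix m m ℝ}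

theorem posSemidef_one_sub_inv_one_add_mul_self (hA : A.PosSemidef) :
    (1 - (1 + A)⁻¹ * (1 + A)⁻¹).PosSemidef := by
  have hM : (1 + A).PosDef := PosDef.one.add_posSemidef hA
  have hu : IsUnit (1 + A).det := (isUnit_iff_isUnit_det _).mp hM.isUnit
  have hAA : (A * A + (A + A)).PosSemidef := by
    have := posSemidef_conjTranspose_mul_self A
    rw [hA.isHermitian.eq] at this
    exact this.add (hA.add hA)
  have key : (1 + A)⁻¹ * (A * A + (A + A)) * (1 + A)⁻¹ = 1 - (1 + A)⁻¹ * (1 + A)⁻¹ := by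
    have : A * A + (A + A) = (1 + A) * (1 + A) - 1 := by noncomm_ring
    rw [this, mul_sub, sub_mul, Matrix.mul_one, Matrix.mul_assoc, Matrix.mul_assoc,
      mul_nonsing_inv _ hu, Matrix.mul_one, nonsing_inv_mul _ hu]
  exact key ▸ hAA.mul_mul_of_isHermitian hM.isHermitian.inv

theorem neg_trace_inv_one_add_mul_mul_le {Q : Matrix m m ℝ} (hA : A.PosSemidef)
    (hQ : Q.PosSemidef) :
    -((1 + A)⁻¹ * (Q * A + A * Q - Q * A * Q) * (1 + A)⁻¹).trace ≤ (Q * A * Q).trace := by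
  set K := (1 + A)⁻¹
  have hM : (1 + A).PosDef := PosDef.one.add_posSemidef hA
  have hu : IsUnit (1 + A).det := (isUnit_iff_isUnit_det _).mp hM.isUnit
  have hAK : A * K = K * A := by
    have h : (1 + A) * K = K * (1 + A) := by rw [mul_nonsing_inv _ hu, nonsing_inv_mul _ hu]
    simpa [add_mul, mul_add] using h
  have hQA : (K * (Q * A) * K).trace = (Q * (K * A * K)).trace := by
    rw [Matrix.mul_assoc, trace_mul_comm]
    simp only [Matrix.mul_assoc]
    rw [← Matrix.mul_assoc K A, ← hAK, Matrix.mul_assoc]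
  have hAQ : (K * (A * Q) * K).trace = (Q * (K * A * K)).trace := by
    rw [← Matrix.mul_assoc, Matrix.mul_assoc, trace_mul_comm]
    simp only [Matrix.mul_assoc]
    rw [hAK]
  have hcross := hQ.trace_mul_nonneg (hA.mul_mul_of_isHermitian hM.isHermitian.inv)
  have hcontr := trace_mul_mul_le_trace (hA.mul_mul_of_isHermitian hQ.isHermitian)
    (posSemidef_one_sub_inv_one_add_mul_self hA)
  rw [mul_sub, sub_mul, mul_add, add_mul, trace_sub, trace_add, hQA, hAQ]
  linarith

theorem trace_inv_one_add_sub_trace_inv_one_add_compression_le (hA : A.PosSemidef)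
    (hP : P.IsHermitian) (hPP : P * P = P) :
    ((1 + A)⁻¹).trace - ((1 + P * A * P)⁻¹).trace ≤ (A - P * A * P).trace := by
  have hQ := posSemidef_one_sub_of_isHermitian_of_mul_self hP hPP
  have hN : (1 + P * A * P).PosDef := PosDef.one.add_posSemidef (hA.mul_mul_of_isHermitian hP)
  have h := trace_inv_sub_trace_inv_le (PosDef.one.add_posSemidef hA).isHermitian hN
  rw [show 1 + P * A * P - (1 + A) = -((1 - P) * A + A * (1 - P) - (1 - P) * A * (1 - P)) by
    noncomm_ring, mul_neg, neg_mul, trace_neg] at h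
  linarith [neg_trace_inv_one_add_mul_mul_le hA hQ, trace_one_sub_mul_mul_one_sub (A := A) hPP]

theorem trace_inv_one_add_compression_sub_trace_inv_one_add_le (hA : A.PosSemidef)
    (hP : P.IsHermitian) (hPP : P * P = P) :
    ((1 + P * A * P)⁻¹).trace - ((1 + A)⁻¹).trace ≤ (A - P * A * P).trace := by
  have hN : (1 + P * A * P).PosDef := PosDef.one.add_posSemidef (hA.mul_mul_of_isHermitian hP)
  have hu : IsUnit (1 + P * A * P).det := (isUnit_iff_isUnit_det _).mp hN.isUnit
  have hNQ : (1 + P * A * P)⁻¹ * (1 - P) = 1 - P := by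
    conv_lhs => rw [← one_add_mul_mul_mul_one_sub (A := A) hPP]
    exact nonsing_inv_mul_cancel_left _ _ hu
  have hQN : (1 - P) * (1 + P * A * P)⁻¹ = 1 - P := by
    conv_lhs => rw [← one_sub_mul_one_add_mul_mul (A := A) hPP]
    exact mul_nonsing_inv_cancel_right _ _ hu
  have hS : A - P * A * P = (1 - P) * A + P * A * (1 - P) := by noncomm_ring
  have h := trace_inv_sub_trace_inv_le hN.isHermitian (PosDef.one.add_posSemidef hA)
  rwa [show 1 + A - (1 + P * A * P) = A - P * A * P by abel, hS,
    trace_mul_mul_eq_of_mul_eq hNQ hQN, ← hS] at h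

end Matrix

theorem stmt_3 {n : ℕ} (A P : Matrix (Fin n) (Fin n) ℝ)
    (hA : A.PosSemidef) (hPsym : P.transpose = P) (hPproj : P * P = P) :
    |((1 + A)⁻¹).trace - ((1 + P * A * P)⁻¹).trace| ≤ (A - P * A * P).trace := by
  have hP : P.IsHermitian := by rwa [IsHermitian, conjTranspose_eq_transpose_of_trivial]
  exact abs_sub_le_iff.mpr
    ⟨trace_inv_one_add_sub_trace_inv_one_add_compression_le hA hP hPproj,
      trace_inv_one_add_compression_sub_trace_inv_one_add_le hA hP hPproj⟩
end

section
/- Let A be an n×n symmetric positive semidefinite matrix and P an n×n orthogonal projection matrix. Then trace((I + A)(I + P A P)⁻¹) ≤ n + trace(A − P A P). -/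
/-! With `C = P A P`, `B = 1 + C` and `E = A - C`, one has `(1 + A) B⁻¹ = 1 + E + E (B⁻¹ - 1)`.
The identity `B⁻¹ - 1 = C B⁻¹ C - C` shows that `B⁻¹ - 1` has the form `P X P`, while
`P E P = 0`, so by cyclicity of the trace the last term is traceless. The inequality is thus an
equality; `B` is invertible since `P A P = Pᵀ A P` is positive semidefinite. -/

namespace Matrix

variable {m R : Type*} [Fintype m] [CommRing R]

theorem trace_mul_compress_eq_zero {E P : Matrix m m R} (hE : P * E * P = 0)
    (X : Matrix m m R) : (E * (P * X * P)).trace = 0 := by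
  rw [← mul_assoc, ← mul_assoc, trace_mul_cycle, ← mul_assoc, hE, zero_mul, trace_zero]

theorem compress_sub_compress_eq_zero {P : Matrix m m R} (hP : P * P = P) (A : Matrix m m R) :
    P * (A - P * A * P) * P = 0 := by
  have : P * (P * A * P) * P = P * A * P := by
    simp only [← mul_assoc, hP]; rw [mul_assoc, hP]
  rw [mul_sub, sub_mul, this, sub_self]

variable [DecidableEq m]

theorem inv_one_add_compress_sub_one {A P : Matrix m m R} (h : IsUnit (1 + P * A * P).det) :
    (1 + P * A * P)⁻¹ - 1 = P * (A * P * (1 + P * A * P)⁻¹ * P * A - A) * P := by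
  set C := P * A * P
  have hl : (1 + C)⁻¹ = 1 - (1 + C)⁻¹ * C := by
    rw [eq_sub_iff_add_eq, ← mul_one_add, nonsing_inv_mul _ h]
  have hr : (1 + C)⁻¹ = 1 - C * (1 + C)⁻¹ := by
    rw [eq_sub_iff_add_eq, ← one_add_mul, mul_nonsing_inv _ h]
  calc (1 + C)⁻¹ - 1 = C * (1 + C)⁻¹ * C - C := by
        conv_lhs => rw [hr, hl]
        noncomm_ring
    _ = _ := by simp only [C]; noncomm_ring

theorem trace_one_add_mul_inv_one_add_compress {A P : Matrix m m R} (hP : P * P = P)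
    (h : IsUnit (1 + P * A * P).det) :
    ((1 + A) * (1 + P * A * P)⁻¹).trace = Fintype.card m + (A - P * A * P).trace := by
  have hsplit : (1 + A) * (1 + P * A * P)⁻¹
      = 1 + (A - P * A * P) + (A - P * A * P) * ((1 + P * A * P)⁻¹ - 1) := by
    rw [show 1 + A = (1 + P * A * P) + (A - P * A * P) by abel, add_mul, mul_nonsing_inv _ h]
    noncomm_ring
  rw [hsplit, inv_one_add_compress_sub_one h, trace_add,
    trace_mul_compress_eq_zero (compress_sub_compress_eq_zero hP A), trace_add, trace_one,
    add_zero]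

theorem posDef_one_add_conj {K : Type*} [Field K] [PartialOrder K] [StarRing K]
    [StarOrderedRing K] {A P : Matrix m m K} (hA : A.PosSemidef) (hP : Pᴴ = P) :
    (1 + P * A * P).PosDef := by
  refine PosDef.one.add_posSemidef ?_
  simpa only [hP] using hA.conjTranspose_mul_mul_same P

end Matrix

theorem stmt_4 {n : ℕ} (A P : Matrix (Fin n) (Fin n) ℝ)
    (hA : A.PosSemidef) (hPsym : P.transpose = P) (hPproj : P * P = P) :
    ((1 + A) * (1 + P * A * P)⁻¹).trace ≤ (n : ℝ) + (A - P * A * P).trace := by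
  have hB : (1 + P * A * P).PosDef :=
    Matrix.posDef_one_add_conj hA (by rwa [Matrix.conjTranspose_eq_transpose_of_trivial])
  rw [Matrix.trace_one_add_mul_inv_one_add_compress hPproj
    ((Matrix.isUnit_iff_isUnit_det _).mp hB.isUnit), Fintype.card_fin]
end

section
/- Let A be an n×n symmetric positive semidefinite matrix and P an n×n orthogonal projection matrix. Then 0 ≤ log det(I + A) − log det(I + P A P) ≤ trace(A − P A P). -/
/-!
Write `A = B²` with `B = √A` and split `A = C + E` with `C = BPB` and `E = B(1 - P)B`, both
positive semidefinite. By Sylvester's determinant identity `det (1 + PAP) = det (1 + C)`, and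
`tr (PAP) = tr C`, so it suffices to show `0 ≤ log det (1 + C + E) - log det (1 + C) ≤ tr E`.
With `T = √(1 + C)` one has `1 + C + E = T (1 + F) T` for `F = T⁻¹ E T⁻¹ ⪰ 0`, so the difference
is `log det (1 + F)`, which lies between `0` and `tr F` because `1 ≤ 1 + λ ≤ exp λ` for every
eigenvalue `λ ≥ 0` of `F`. Finally `tr F = tr (T⁻² E) ≤ tr E` since `T⁻² = (1 + C)⁻¹ ≤ 1`.
-/

open Matrix
open scoped MatrixOrder

namespace Matrix

variable {n : Type*} [Fintype n]

lemma PosSemidef.mul_mul_of_isHermitian_s5 {R : Type*} [Ring R] [PartialOrder R] [StarRing R]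
    {A S : Matrix n n R} (hA : A.PosSemidef) (hS : S.IsHermitian) : (S * A * S).PosSemidef := by
  simpa only [hS.eq] using hA.mul_mul_conjTranspose_same S

lemma det_one_add_mul_mul_of_isIdempotentElem {R : Type*} [CommRing R] [DecidableEq n]
    {P : Matrix n n R} (hP : IsIdempotentElem P) (B : Matrix n n R) :
    (1 + P * (B * B) * P).det = (1 + B * P * B).det := by
  rw [show P * (B * B) * P = P * B * (B * P) by noncomm_ring, det_one_add_mul_comm,
    show B * P * (P * B) = B * (P * P) * B by noncomm_ring, hP.eq]

lemma trace_mul_mul_of_isIdempotentElem {R : Type*} [CommRing R] {P : Matrix n n R}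
    (hP : IsIdempotentElem P) (B : Matrix n n R) :
    (P * (B * B) * P).trace = (B * P * B).trace := by
  rw [trace_mul_comm, ← mul_assoc, hP.eq, ← trace_mul_cycle, mul_assoc]

variable [DecidableEq n]

lemma PosSemidef.trace_mul_nonneg_s5 {X Y : Matrix n n ℝ} (hX : X.PosSemidef) (hY : Y.PosSemidef) :
    0 ≤ (X * Y).trace := by
  rw [← CFC.sqrt_mul_sqrt_self X hX.nonneg, mul_assoc, trace_mul_comm, mul_assoc, ← mul_assoc]
  exact (hY.mul_mul_of_isHermitian_s5 (CFC.sqrt_nonneg X).posSemidef.isHermitian).trace_nonneg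

lemma trace_mul_le_trace_of_le_one {X E : Matrix n n ℝ} (hX : X ≤ 1) (hE : E.PosSemidef) :
    (X * E).trace ≤ E.trace := by
  have := (le_iff.mp hX).trace_mul_nonneg_s5 hE
  rwa [Matrix.sub_mul, one_mul, trace_sub, sub_nonneg] at this

lemma IsHermitian.det_one_add {F : Matrix n n ℝ} (hF : F.IsHermitian) :
    (1 + F).det = ∏ i, (1 + hF.eigenvalues i) := by
  have h : cfc (fun x : ℝ => 1 + x) F = 1 + F := by
    rw [cfc_const_add (1 : ℝ) (fun x => x) F, cfc_id' ℝ F, map_one]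
  rw [← h, hF.cfc_eq, IsHermitian.cfc]
  simp [-Unitary.conjStarAlgAut_apply]

lemma PosSemidef.one_le_det_one_add {F : Matrix n n ℝ} (hF : F.PosSemidef) :
    1 ≤ (1 + F).det := by
  rw [hF.isHermitian.det_one_add]
  exact Finset.one_le_prod fun i _ => by linarith [hF.eigenvalues_nonneg i]

lemma PosSemidef.det_one_add_le_exp_trace {F : Matrix n n ℝ} (hF : F.PosSemidef) :
    (1 + F).det ≤ Real.exp F.trace := by
  rw [hF.isHermitian.det_one_add, hF.isHermitian.trace_eq_sum_eigenvalues, Real.exp_sum]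
  refine Finset.prod_le_prod (fun i _ => by linarith [hF.eigenvalues_nonneg i]) fun i _ => ?_
  simpa [add_comm] using Real.add_one_le_exp (hF.isHermitian.eigenvalues i)

lemma PosSemidef.exists_det_one_add_add_eq_mul {C E : Matrix n n ℝ} (hC : C.PosSemidef)
    (hE : E.PosSemidef) : ∃ F : Matrix n n ℝ, F.PosSemidef ∧ F.trace ≤ E.trace ∧
      (1 + C + E).det = (1 + C).det * (1 + F).det := by
  set T := CFC.sqrt (1 + C)
  have h1C : 0 ≤ 1 + C := (PosSemidef.one.add hC).nonneg
  have hTT : T * T = 1 + C := CFC.sqrt_mul_sqrt_self _ h1C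
  have hT : IsUnit T.det := (isUnit_iff_isUnit_det T).mp <|
    (CFC.isUnit_sqrt_iff _ h1C).mpr (PosDef.one.add_posSemidef hC).isUnit
  have hTinv : T⁻¹.IsHermitian := (CFC.sqrt_nonneg _).posSemidef.isHermitian.inv
  refine ⟨T⁻¹ * E * T⁻¹, hE.mul_mul_of_isHermitian_s5 hTinv, ?_, ?_⟩
  · have hle : T⁻¹ * T⁻¹ ≤ 1 := by
      have h : 1 - T⁻¹ * T⁻¹ = T⁻¹ * C * T⁻¹ := by
        rw [show C = T * T - 1 by rw [hTT, add_sub_cancel_left],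
          show T⁻¹ * (T * T - 1) * T⁻¹ = T⁻¹ * T * (T * T⁻¹) - T⁻¹ * T⁻¹ by noncomm_ring,
          nonsing_inv_mul _ hT, mul_nonsing_inv _ hT, one_mul]
      rw [le_iff, h]
      exact hC.mul_mul_of_isHermitian_s5 hTinv
    rw [trace_mul_cycle]
    exact trace_mul_le_trace_of_le_one hle hE
  · have h : 1 + C + E = T * (1 + T⁻¹ * E * T⁻¹) * T := by
      rw [Matrix.mul_add, Matrix.add_mul, mul_one, hTT,
        show T * (T⁻¹ * E * T⁻¹) * T = T * T⁻¹ * E * (T⁻¹ * T) by noncomm_ring,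
        mul_nonsing_inv _ hT, nonsing_inv_mul _ hT, one_mul, mul_one]
    rw [h, det_mul, det_mul, mul_right_comm, ← det_mul, hTT]

lemma PosSemidef.log_det_one_add_add_sub_log_det_one_add_mem_Icc {C E : Matrix n n ℝ}
    (hC : C.PosSemidef) (hE : E.PosSemidef) :
    Real.log (1 + C + E).det - Real.log (1 + C).det ∈ Set.Icc 0 E.trace := by
  obtain ⟨F, hF, hFE, hdet⟩ := hC.exists_det_one_add_add_eq_mul hE
  have hCpos : 0 < (1 + C).det := (PosDef.one.add_posSemidef hC).det_pos
  have hFpos : 0 < (1 + F).det := one_pos.trans_le hF.one_le_det_one_add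
  rw [hdet, Real.log_mul hCpos.ne' hFpos.ne', add_sub_cancel_left]
  exact ⟨Real.log_nonneg hF.one_le_det_one_add,
    ((Real.log_le_iff_le_exp hFpos).mpr hF.det_one_add_le_exp_trace).trans hFE⟩

end Matrix

theorem stmt_5 {n : ℕ} (A P : Matrix (Fin n) (Fin n) ℝ)
    (hA : A.PosSemidef) (hPsym : P.transpose = P) (hPproj : P * P = P) :
    0 ≤ Real.log (1 + A).det - Real.log (1 + P * A * P).det ∧
    Real.log (1 + A).det - Real.log (1 + P * A * P).det ≤ (A - P * A * P).trace := by
  have hP : IsStarProjection P :=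
    ⟨hPproj, by rwa [IsSelfAdjoint, star_eq_conjTranspose, conjTranspose_eq_transpose_of_trivial]⟩
  obtain ⟨B, hB, rfl⟩ : ∃ B : Matrix (Fin n) (Fin n) ℝ, B.IsHermitian ∧ A = B * B :=
    ⟨CFC.sqrt A, (CFC.sqrt_nonneg A).posSemidef.isHermitian,
      (CFC.sqrt_mul_sqrt_self A hA.nonneg).symm⟩
  have hC : (B * P * B).PosSemidef := hP.nonneg.posSemidef.mul_mul_of_isHermitian_s5 hB
  have hE : (B * (1 - P) * B).PosSemidef := hP.one_sub_nonneg.posSemidef.mul_mul_of_isHermitian_s5 hB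
  rw [det_one_add_mul_mul_of_isIdempotentElem hP.isIdempotentElem, trace_sub,
    trace_mul_mul_of_isIdempotentElem hP.isIdempotentElem,
    show B * B = B * P * B + B * (1 - P) * B by noncomm_ring, trace_add, add_sub_cancel_left,
    ← add_assoc]
  exact hC.log_det_one_add_add_sub_log_det_one_add_mem_Icc hE
end

section
/- Let A and B be n×n symmetric positive semidefinite matrices with B ⪯ A in the Loewner order (i.e., A − B positive semidefinite). Then 0 ≤ log det(I + A) − log det(I + B) ≤ log det(I + A − B). -/
/-!
Write a positive semidefinite `C` as `R⋆ R`. The matrix determinant lemma gives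
`det (X + C) = det X · det (1 + R X⁻¹ R⋆)`. For `X` positive definite the last factor is at
least `1`, so `det` is monotone in the Loewner order; for `X = 1 + B` one has `X⁻¹ ≤ 1`, so by
that monotonicity the factor is at most `det (1 + R R⋆) = det (1 + C)`, i.e. `log det (1 + ·)` is
subadditive. Taking `C = A - B` and logarithms gives both inequalities.
-/

open Matrix
open scoped MatrixOrder

namespace Matrix

variable {n : Type*} [Fintype n] [DecidableEq n]

theorem PosSemidef.one_sub_inv_one_add {K : Type*} [Field K] [PartialOrder K] [StarRing K]
    [StarOrderedRing K] {P : Matrix n n K} (hP : P.PosSemidef) :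
    (1 - (1 + P)⁻¹).PosSemidef := by
  set M := 1 + P
  have hM : M.PosDef := PosDef.one.add_posSemidef hP
  have hdet : IsUnit M.det := (isUnit_iff_isUnit_det M).mp hM.isUnit
  have hPM : (P * M).PosSemidef := by
    rw [Matrix.mul_add, mul_one]
    exact hP.add (by simpa [hP.1.eq] using posSemidef_conjTranspose_mul_self P)
  -- `P` commutes with `M = 1 + P`, and `P M = P + P⋆ P`.
  have key : 1 - M⁻¹ = M⁻¹ * (P * M) * M⁻¹ := by
    have hcomm : P * M = M * P := by simp [M, Matrix.mul_add, Matrix.add_mul]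
    calc 1 - M⁻¹ = (M - 1) * M⁻¹ := by rw [Matrix.sub_mul, mul_nonsing_inv M hdet, one_mul]
      _ = M⁻¹ * (M * P) * M⁻¹ := by
        rw [← Matrix.mul_assoc, nonsing_inv_mul M hdet, one_mul, add_sub_cancel_left]
      _ = M⁻¹ * (P * M) * M⁻¹ := by rw [hcomm]
  rw [key]
  simpa [hM.1.inv.eq] using hPM.mul_mul_conjTranspose_same M⁻¹

theorem IsHermitian.det_cfc {𝕜 : Type*} [RCLike 𝕜] {A : Matrix n n 𝕜} (hA : A.IsHermitian)
    (f : ℝ → ℝ) : (cfc f A).det = ∏ i, (f (hA.eigenvalues i) : 𝕜) := by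
  simp [hA.cfc_eq, IsHermitian.cfc, -Unitary.conjStarAlgAut_apply]

theorem PosSemidef.one_le_det_one_add_s7 {P : Matrix n n ℝ} (hP : P.PosSemidef) :
    1 ≤ (1 + P).det := by
  have hcfc : 1 + P = cfc (fun x : ℝ => 1 + x) P := by
    rw [cfc_const_add 1 (fun x => x) P continuousOn_id hP.1.isSelfAdjoint,
      cfc_id' ℝ P hP.1.isSelfAdjoint, map_one]
  rw [hcfc, hP.1.det_cfc]
  exact Finset.one_le_prod fun i _ => by simpa using hP.eigenvalues_nonneg i

theorem PosDef.det_le_det_add {X P : Matrix n n ℝ} (hX : X.PosDef) (hP : P.PosSemidef) :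
    X.det ≤ (X + P).det := by
  obtain ⟨B, rfl⟩ := CStarAlgebra.nonneg_iff_eq_star_mul_self.mp hP.nonneg
  rw [det_add_mul _ _ hX.det_pos.ne'.isUnit]
  exact le_mul_of_one_le_right hX.det_pos.le
    (hX.posSemidef.inv.mul_mul_conjTranspose_same B).one_le_det_one_add_s7

theorem det_one_add_add_le {B C : Matrix n n ℝ} (hB : B.PosSemidef) (hC : C.PosSemidef) :
    (1 + B + C).det ≤ (1 + B).det * (1 + C).det := by
  obtain ⟨R, rfl⟩ := CStarAlgebra.nonneg_iff_eq_star_mul_self.mp hC.nonneg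
  have hM : (1 + B).PosDef := PosDef.one.add_posSemidef hB
  have hQ : (1 + R * (1 + B)⁻¹ * Rᴴ).PosDef :=
    PosDef.one.add_posSemidef (hM.posSemidef.inv.mul_mul_conjTranspose_same R)
  have hle : (1 + R * (1 + B)⁻¹ * Rᴴ).det ≤ (1 + R * Rᴴ).det := by
    simpa [Matrix.mul_sub, Matrix.sub_mul] using
      hQ.det_le_det_add (hB.one_sub_inv_one_add.mul_mul_conjTranspose_same R)
  calc (1 + B + star R * R).det = (1 + B).det * (1 + R * (1 + B)⁻¹ * Rᴴ).det :=
        det_add_mul _ _ hM.det_pos.ne'.isUnit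
    _ ≤ (1 + B).det * (1 + R * Rᴴ).det := by gcongr; exact hM.det_pos.le
    _ = (1 + B).det * (1 + star R * R).det := by rw [det_one_add_mul_comm, star_eq_conjTranspose]

end Matrix

theorem stmt_7_general {n : ℕ} (A B : Matrix (Fin n) (Fin n) ℝ)
    (hB : B.PosSemidef) (hAB : (A - B).PosSemidef) :
    0 ≤ Real.log (1 + A).det - Real.log (1 + B).det ∧
    Real.log (1 + A).det - Real.log (1 + B).det ≤ Real.log (1 + (A - B)).det := by
  have hB1 : (1 + B).PosDef := PosDef.one.add_posSemidef hB
  have hmono : (1 + B).det ≤ (1 + A).det := by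
    simpa using hB1.det_le_det_add hAB
  have hsubadd : (1 + A).det ≤ (1 + B).det * (1 + (A - B)).det := by
    simpa using det_one_add_add_le hB hAB
  have hdetB : 0 < (1 + B).det := hB1.det_pos
  have hdetAB : 0 < (1 + (A - B)).det := (PosDef.one.add_posSemidef hAB).det_pos
  refine ⟨sub_nonneg.mpr (Real.log_le_log hdetB hmono), ?_⟩
  rw [sub_le_iff_le_add', ← Real.log_mul hdetB.ne' hdetAB.ne']
  exact Real.log_le_log (hdetB.trans_le hmono) hsubadd

theorem stmt_7 {n : ℕ} (A B : Matrix (Fin n) (Fin n) ℝ)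
    (hA : A.PosSemidef) (hB : B.PosSemidef) (hAB : (A - B).PosSemidef) :
    0 ≤ Real.log (1 + A).det - Real.log (1 + B).det ∧
    Real.log (1 + A).det - Real.log (1 + B).det ≤ Real.log (1 + (A - B)).det :=
  stmt_7_general A B hB hAB
end

section
/- Let Z be an n×k real matrix with orthonormal columns (Zᵀ Z = I_k), and let Θ be a k×k diagonal matrix with nonnegative diagonal entries. Define D = I_k − (I_k + Θ)^{-1/2}. Then (I_n − Z D Zᵀ)(I_n − Z D Zᵀ)ᵀ = (I_n + Z Θ Zᵀ)⁻¹. -/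
theorem stmt_11 {n k : ℕ} (Z : Matrix (Fin n) (Fin k) ℝ)
    (hZ : Z.transpose * Z = 1)
    (θ : Fin k → ℝ) (hθ : ∀ i, 0 ≤ θ i)
    (D : Matrix (Fin k) (Fin k) ℝ)
    (hD : D = 1 - Matrix.diagonal (fun i => (Real.sqrt (1 + θ i))⁻¹)) :
    (1 - Z * D * Z.transpose) * (1 - Z * D * Z.transpose).transpose =
      (1 + Z * Matrix.diagonal θ * Z.transpose)⁻¹ := by
  have hZZ : ∀ X : Matrix (Fin k) (Fin n) ℝ, Z.transpose * (Z * X) = X := by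
    intro X; rw [← Matrix.mul_assoc, hZ, Matrix.one_mul]
  have aux : ∀ A B : Matrix (Fin k) (Fin k) ℝ,
      (1 + Z * A * Z.transpose) * (1 + Z * B * Z.transpose)
        = 1 + Z * (A + B + A * B) * Z.transpose := by
    intro A B
    have h2 : Z * A * Z.transpose * (Z * B * Z.transpose) = Z * (A * B) * Z.transpose := by
      simp only [Matrix.mul_assoc]
      rw [hZZ]
    simp only [Matrix.mul_add, Matrix.add_mul, Matrix.mul_one, Matrix.one_mul, h2]
    abel
  have hDT : D.transpose = D := by
    subst hD
    simp [Matrix.transpose_sub]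
  have hrw : ∀ A : Matrix (Fin k) (Fin k) ℝ,
      1 - Z * A * Z.transpose = 1 + Z * (-A) * Z.transpose := by
    intro A
    simp [Matrix.mul_neg, Matrix.neg_mul, sub_eq_add_neg]
  have hkey : (1 - Z * D * Z.transpose) * (1 - Z * D * Z.transpose).transpose *
      (1 + Z * Matrix.diagonal θ * Z.transpose) = 1 := by
    rw [Matrix.transpose_sub, Matrix.transpose_one, Matrix.transpose_mul, Matrix.transpose_mul,
      Matrix.transpose_transpose, hDT, ← Matrix.mul_assoc, hrw, aux, aux]
    have hM : (-D + -D + -D * -D + Matrix.diagonal θ +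
        (-D + -D + -D * -D) * Matrix.diagonal θ) = 0 := by
      subst hD
      simp only [← Matrix.diagonal_one, ← Matrix.diagonal_zero]
      simp only [Matrix.diagonal_sub, Matrix.diagonal_neg, Matrix.diagonal_mul_diagonal,
        Matrix.diagonal_add]
      rw [Matrix.diagonal_eq_diagonal_iff]
      intro i
      have ha : (0:ℝ) < 1 + θ i := by linarith [hθ i]
      have hs : (Real.sqrt (1 + θ i))⁻¹ * (Real.sqrt (1 + θ i))⁻¹ = (1 + θ i)⁻¹ := by
        rw [← mul_inv, Real.mul_self_sqrt ha.le]
      linear_combination (1 + θ i) * hs + inv_mul_cancel₀ ha.ne'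
    rw [hM]
    simp
  exact (Matrix.inv_eq_left_inv hkey).symm
end

section
/- Let H and Ĥ be n×n symmetric positive semidefinite matrices and λ > 0. Then ‖(I + λ⁻² H)⁻¹ − (I + λ⁻² Ĥ)⁻¹‖₂ ≤ ω/(λ² + ω), where ω = ‖H − Ĥ‖_F and ‖·‖₂ is the spectral (operator 2-) norm. -/
noncomputable def frobNorm {n : ℕ} (M : Matrix (Fin n) (Fin n) ℝ) : ℝ :=
  Real.sqrt (∑ i, ∑ j, (M i j) ^ 2)

noncomputable def specNorm {n : ℕ} (M : Matrix (Fin n) (Fin n) ℝ) : ℝ :=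
  ‖Matrix.toEuclideanCLM (𝕜 := ℝ) M‖

/-! With `A = 1 + λ⁻²H`, `B = 1 + λ⁻²Ĥ` and `d = λ⁻²ω`, the bound `‖H - Ĥ‖₂ ≤ ‖H - Ĥ‖_F = ω`
gives `B ≤ A + d` in the Loewner order, hence `(A + d)⁻¹ ≤ B⁻¹` by antitonicity of the inverse.
Since `A ≥ 1`, the functional calculus turns the scalar bound `1/x - 1/(x + d) ≤ d/(1 + d)`
(for `x ≥ 1`) into `A⁻¹ - (A + d)⁻¹ ≤ d/(1 + d)`. So `A⁻¹ - B⁻¹ ≤ d/(1 + d)`, symmetrically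
`B⁻¹ - A⁻¹ ≤ d/(1 + d)`, and a self-adjoint matrix between `-r` and `r` has spectral norm at
most `r`; finally `d/(1 + d) = ω/(λ² + ω)`. -/

section ContinuousFunctionalCalculus

variable {A : Type*} [TopologicalSpace A] [Ring A] [StarRing A] [PartialOrder A]
  [StarOrderedRing A] [Algebra ℝ A] [ContinuousFunctionalCalculus ℝ A IsSelfAdjoint]
  [NonnegSpectrumClass ℝ A]

lemma ringInverse_sub_ringInverse_add_algebraMap_le {a : A} (ha : 1 ≤ a) {d : ℝ} (hd : 0 ≤ d) :
    Ring.inverse a - Ring.inverse (a + algebraMap ℝ A d) ≤ algebraMap ℝ A (d / (1 + d)) := by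
  have ha_sa : IsSelfAdjoint a := .of_nonneg (zero_le_one.trans ha)
  have hspec : ∀ x ∈ spectrum ℝ a, 1 ≤ x := by
    rw [← algebraMap_le_iff_le_spectrum, map_one]
    exact ha
  have hx0 : ∀ x ∈ spectrum ℝ a, x ≠ 0 := fun x hx => by linarith [hspec x hx]
  have hxd : ∀ x ∈ spectrum ℝ a, x + d ≠ 0 := fun x hx => by linarith [hspec x hx]
  have hinv := continuousOn_id.inv₀ hx0
  have hinv_add := (continuousOn_id.add continuousOn_const).inv₀ hxd
  have hcfc : Ring.inverse a - Ring.inverse (a + algebraMap ℝ A d)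
      = cfc (fun x => x⁻¹ - (x + d)⁻¹) a := by
    rw [cfc_sub (fun x => x⁻¹) (fun x => (x + d)⁻¹) a hinv hinv_add,
      cfc_inv (fun x => x) a hx0, cfc_inv (· + d) a hxd, cfc_add_const d (fun x => x) a,
      cfc_id' ℝ a]
  rw [hcfc]
  refine cfc_le_algebraMap _ _ _ (fun x hx => ?_) (hinv.sub hinv_add)
  have hx := hspec x hx
  rw [inv_sub_inv (by positivity) (by positivity), add_sub_cancel_left]
  gcongr
  nlinarith

end ContinuousFunctionalCalculus

lemma IsSelfAdjoint.norm_le_iff_mem_Icc {A : Type*} [NormedRing A] [StarRing A]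
    [NormedAlgebra ℝ A] [PartialOrder A] [StarOrderedRing A]
    [IsometricContinuousFunctionalCalculus ℝ A IsSelfAdjoint] [NonnegSpectrumClass ℝ A]
    {a : A} (ha : IsSelfAdjoint a) {r : ℝ} (hr : 0 ≤ r) :
    ‖a‖ ≤ r ↔ a ∈ Set.Icc (algebraMap ℝ A (-r)) (algebraMap ℝ A r) := by
  conv_lhs => rw [← cfc_id' ℝ a]
  rw [norm_cfc_le_iff _ _ hr, Set.mem_Icc, algebraMap_le_iff_le_spectrum,
    le_algebraMap_iff_spectrum_le, ← forall₂_and]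
  simp only [Real.norm_eq_abs, abs_le]

namespace Matrix

open scoped MatrixOrder ComplexOrder

variable {n 𝕜 : Type*} [Fintype n] [DecidableEq n] [RCLike 𝕜]

lemma PosDef.inv_le_inv {A B : Matrix n n 𝕜} (hA : A.PosDef) (hAB : A ≤ B) : B⁻¹ ≤ A⁻¹ := by
  have hB : B.PosDef := by simpa using hA.add_posSemidef hAB
  have := hA.isUnit.invertible
  have := hB.isUnit.invertible
  have := hA.inv.isUnit.invertible
  rw [le_iff] at hAB ⊢
  -- both conditions are the positivity of `fromBlocks B 1 1 A⁻¹`, via its two Schur complements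
  have h₁ := PosDef.fromBlocks₁₁ 1 A⁻¹ hB
  have h₂ := PosDef.fromBlocks₂₂ B 1 hA.inv
  simp only [conjTranspose_one, Matrix.one_mul, Matrix.mul_one, inv_inv_of_invertible] at h₁ h₂
  exact h₁.1 (h₂.2 hAB)

lemma inv_sub_inv_le_of_sub_le {A B : Matrix n n 𝕜} (hA : 1 ≤ A) (hB : 1 ≤ B) {d : ℝ}
    (hd : 0 ≤ d) (hBA : B - A ≤ algebraMap ℝ _ d) :
    A⁻¹ - B⁻¹ ≤ algebraMap ℝ _ (d / (1 + d)) := by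
  have hB' : B.PosDef := by simpa using PosDef.one.add_posSemidef hB
  calc A⁻¹ - B⁻¹ ≤ A⁻¹ - (A + algebraMap ℝ _ d)⁻¹ :=
        sub_le_sub_left (hB'.inv_le_inv (sub_le_iff_le_add'.mp hBA)) _
    _ ≤ _ := by
      simpa only [nonsing_inv_eq_ringInverse] using
        ringInverse_sub_ringInverse_add_algebraMap_le hA hd

end Matrix

section Frobenius

open Matrix

attribute [local instance] Matrix.frobeniusSeminormedAddCommGroup

lemma frobNorm_eq_norm {n : ℕ} (E : Matrix (Fin n) (Fin n) ℝ) : frobNorm E = ‖E‖ := by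
  simp [frobNorm, frobenius_norm_def, Real.sqrt_eq_rpow, Real.norm_eq_abs]

lemma specNorm_le_frobNorm {n : ℕ} (E : Matrix (Fin n) (Fin n) ℝ) : specNorm E ≤ frobNorm E := by
  refine ContinuousLinearMap.opNorm_le_bound _ (Real.sqrt_nonneg _) fun x => ?_
  calc ‖toEuclideanCLM (𝕜 := ℝ) E x‖ = ‖replicateCol Unit (E *ᵥ x.ofLp)‖ := by
        rw [frobenius_norm_replicateCol]; rfl
    _ = ‖E * replicateCol Unit x.ofLp‖ := by rw [replicateCol_mulVec]
    _ ≤ ‖E‖ * ‖replicateCol Unit x.ofLp‖ := frobenius_norm_mul _ _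
    _ = frobNorm E * ‖x‖ := by rw [frobNorm_eq_norm, frobenius_norm_replicateCol]

end Frobenius

open scoped Matrix.Norms.L2Operator MatrixOrder

theorem stmt_12 {n : ℕ} (H Hhat : Matrix (Fin n) (Fin n) ℝ)
    (hH : H.PosSemidef) (hHhat : Hhat.PosSemidef) (l : ℝ) (hl : 0 < l) :
    specNorm ((1 + (l ^ 2)⁻¹ • H)⁻¹ - (1 + (l ^ 2)⁻¹ • Hhat)⁻¹) ≤
      frobNorm (H - Hhat) / (l ^ 2 + frobNorm (H - Hhat)) := by
  set ω := frobNorm (H - Hhat)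
  set A := 1 + (l ^ 2)⁻¹ • H
  set B := 1 + (l ^ 2)⁻¹ • Hhat
  set d := (l ^ 2)⁻¹ * ω with hd_def
  have hc : 0 ≤ (l ^ 2)⁻¹ := by positivity
  have hd : 0 ≤ d := mul_nonneg hc (Real.sqrt_nonneg _)
  have hA : 1 ≤ A := le_add_of_nonneg_right (hH.smul hc).nonneg
  have hB : 1 ≤ B := le_add_of_nonneg_right (hHhat.smul hc).nonneg
  have isSelfAdjoint_of_one_le {X : Matrix (Fin n) (Fin n) ℝ} (hX : 1 ≤ X) : IsSelfAdjoint X :=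
    .of_nonneg (zero_le_one.trans hX)
  have hnorm : ‖A - B‖ ≤ d := by
    rw [add_sub_add_left_eq_sub, ← smul_sub, norm_smul, Real.norm_of_nonneg hc]
    exact mul_le_mul_of_nonneg_left (specNorm_le_frobNorm _) hc
  have hAB_sa := (isSelfAdjoint_of_one_le hA).sub (isSelfAdjoint_of_one_le hB)
  obtain ⟨hBA, hAB⟩ := hAB_sa.norm_le_iff_mem_Icc hd |>.mp hnorm
  rw [map_neg, neg_le, neg_sub] at hBA
  have hD : IsSelfAdjoint (A⁻¹ - B⁻¹) :=
    (Matrix.IsHermitian.inv (isSelfAdjoint_of_one_le hA)).sub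
      (Matrix.IsHermitian.inv (isSelfAdjoint_of_one_le hB))
  have hk : d / (1 + d) = ω / (l ^ 2 + ω) := by
    rw [hd_def]
    field_simp
  rw [← hk]
  refine hD.norm_le_iff_mem_Icc (by positivity) |>.mpr ⟨?_, ?_⟩
  · rw [map_neg, neg_le, neg_sub]
    exact Matrix.inv_sub_inv_le_of_sub_le hB hA hd hAB
  · exact Matrix.inv_sub_inv_le_of_sub_le hA hB hd hBA
end

section
/- Let Q be an n×n symmetric positive definite matrix, λ > 0, and let H, Ĥ be n×n symmetric positive semidefinite matrices. Set Γ = (λ² Q⁻¹ + H)⁻¹ and Γ̂ = (λ² Q⁻¹ + Ĥ)⁻¹. Then ‖Γ − Γ̂‖_F ≤ λ⁻⁴ ω ‖Q‖₂, where ω = ‖Q^{1/2}(H − Ĥ)Q^{1/2}‖_F and Q^{1/2} is the symmetric positive definite square root of Q. -/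
section

open scoped ComplexOrder

/-- The positive semidefinite square root of a positive semidefinite matrix
(the definition removed from Mathlib, restored with its old value). -/
noncomputable def Matrix.PosSemidef.sqrt {n 𝕜 : Type*} [Fintype n] [DecidableEq n] [RCLike 𝕜]
    {A : Matrix n n 𝕜} (hA : A.PosSemidef) : Matrix n n 𝕜 :=
  hA.1.eigenvectorUnitary.1 * Matrix.diagonal ((↑) ∘ (Real.sqrt ·) ∘ hA.1.eigenvalues) *
    (star hA.1.eigenvectorUnitary : Matrix n n 𝕜)

end

open Matrix WithLp
open scoped ComplexOrder MatrixOrder RealInnerProductSpace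

theorem Matrix.PosSemidef.sqrt_eq_cfcSqrt {m 𝕜 : Type*} [Fintype m] [DecidableEq m] [RCLike 𝕜]
    {A : Matrix m m 𝕜} (hA : A.PosSemidef) : hA.sqrt = CFC.sqrt A := by
  rw [CFC.sqrt_eq_real_sqrt A hA.nonneg, cfcₙ_eq_cfc, hA.1.cfc_eq, IsHermitian.cfc,
    Unitary.conjStarAlgAut_apply]
  rfl

theorem Matrix.PosSemidef.mul_mul_self_of_isHermitian {m 𝕜 : Type*} [Fintype m] [RCLike 𝕜]
    {P S : Matrix m m 𝕜} (hP : P.PosSemidef) (hS : S.IsHermitian) : (S * P * S).PosSemidef := by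
  simpa only [hS.eq] using hP.mul_mul_conjTranspose_same S

namespace Matrix

variable {m R : Type*} [Fintype m] [DecidableEq m] [CommRing R]

theorem nonsing_inv_sub_nonsing_inv {A B : Matrix m m R} (hA : IsUnit A.det) (hB : IsUnit B.det) :
    A⁻¹ - B⁻¹ = A⁻¹ * (B - A) * B⁻¹ := by
  simp only [nonsing_inv_eq_ringInverse]
  exact Ring.inverse_sub_inverse (iff_of_true ((isUnit_iff_isUnit_det A).2 hA)
    ((isUnit_iff_isUnit_det B).2 hB))

theorem inv_smul_inv_mul_self_add {S : Matrix m m R} (hS : IsUnit S.det) (c : R)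
    (P : Matrix m m R) : (c • (S * S)⁻¹ + P)⁻¹ = S * (c • 1 + S * P * S)⁻¹ * S := by
  have hfactor : c • (S * S)⁻¹ + P = S⁻¹ * (c • 1 + S * P * S) * S⁻¹ := by
    simp only [mul_inv_rev, mul_add, add_mul, Matrix.mul_smul, Matrix.smul_mul, Matrix.mul_one,
      ← Matrix.mul_assoc, nonsing_inv_mul _ hS, Matrix.one_mul]
    simp only [Matrix.mul_assoc, mul_nonsing_inv _ hS, Matrix.mul_one]
  rw [hfactor, mul_inv_rev, mul_inv_rev, nonsing_inv_nonsing_inv _ hS, ← Matrix.mul_assoc]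

theorem inv_smul_inv_mul_self_add_sub_inv {S P P' : Matrix m m R} (hS : IsUnit S.det) (c : R)
    (hP : IsUnit (c • 1 + S * P * S).det) (hP' : IsUnit (c • 1 + S * P' * S).det) :
    (c • (S * S)⁻¹ + P)⁻¹ - (c • (S * S)⁻¹ + P')⁻¹ =
      S * ((c • 1 + S * P * S)⁻¹ * (S * (P' - P) * S) * (c • 1 + S * P' * S)⁻¹) * S := by
  rw [inv_smul_inv_mul_self_add hS, inv_smul_inv_mul_self_add hS, ← Matrix.sub_mul,
    ← Matrix.mul_sub, nonsing_inv_sub_nonsing_inv hP hP', add_sub_add_left_eq_sub,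
    ← Matrix.sub_mul, ← Matrix.mul_sub]

end Matrix

theorem mul_norm_le_norm_of_coercive {E : Type*} [NormedAddCommGroup E] [InnerProductSpace ℝ E]
    (T : E → E) {c : ℝ} (hT : ∀ x, c * ‖x‖ ^ 2 ≤ ⟪x, T x⟫) (x : E) : c * ‖x‖ ≤ ‖T x‖ := by
  rcases (norm_nonneg x).eq_or_lt with hx | hx
  · rw [← hx, mul_zero]
    exact norm_nonneg _
  · refine le_of_mul_le_mul_right ?_ hx
    calc c * ‖x‖ * ‖x‖ = c * ‖x‖ ^ 2 := by ring
      _ ≤ ⟪x, T x⟫ := hT x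
      _ ≤ ‖x‖ * ‖T x‖ := real_inner_le_norm _ _
      _ = ‖T x‖ * ‖x‖ := mul_comm _ _

section Norms

variable {n : ℕ}

section L2Operator

open scoped Matrix.Norms.L2Operator

theorem specNorm_transpose (M : Matrix (Fin n) (Fin n) ℝ) : specNorm Mᵀ = specNorm M :=
  l2_opNorm_conjTranspose M

theorem Matrix.IsHermitian.specNorm_mul_self {S : Matrix (Fin n) (Fin n) ℝ}
    (hS : S.IsHermitian) : specNorm (S * S) = specNorm S * specNorm S := by
  nth_rewrite 1 [← hS]
  exact l2_opNorm_conjTranspose_mul_self S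

end L2Operator

theorem specNorm_nonneg (M : Matrix (Fin n) (Fin n) ℝ) : 0 ≤ specNorm M :=
  norm_nonneg _

theorem norm_toLp_mulVec_le (M : Matrix (Fin n) (Fin n) ℝ) (v : Fin n → ℝ) :
    ‖toLp 2 (M *ᵥ v)‖ ≤ specNorm M * ‖toLp 2 v‖ :=
  (toEuclideanCLM (𝕜 := ℝ) M).le_opNorm (toLp 2 v)

theorem specNorm_inv_le_of_coercive {A : Matrix (Fin n) (Fin n) ℝ} (hA : IsUnit A.det) {c : ℝ}
    (hc : 0 < c) (hcoer : ∀ x, c * ‖x‖ ^ 2 ≤ ⟪x, toEuclideanCLM (𝕜 := ℝ) A x⟫) :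
    specNorm A⁻¹ ≤ c⁻¹ := by
  refine ContinuousLinearMap.opNorm_le_bound _ (inv_nonneg.2 hc.le) fun y => ?_
  have hinv : toEuclideanCLM (𝕜 := ℝ) A (toEuclideanCLM (𝕜 := ℝ) A⁻¹ y) = y := by
    change (toEuclideanCLM (𝕜 := ℝ) A * toEuclideanCLM (𝕜 := ℝ) A⁻¹) y = y
    rw [← map_mul, mul_nonsing_inv _ hA, map_one, one_apply_eq_self]
  rw [inv_mul_eq_div, le_div_iff₀' hc]
  nth_rewrite 2 [← hinv]
  exact mul_norm_le_norm_of_coercive _ hcoer _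

theorem Matrix.PosSemidef.mul_norm_sq_le_inner_smul_one_add {P : Matrix (Fin n) (Fin n) ℝ}
    (hP : P.PosSemidef) (c : ℝ) (x : EuclideanSpace ℝ (Fin n)) :
    c * ‖x‖ ^ 2 ≤ ⟪x, toEuclideanCLM (𝕜 := ℝ) (c • 1 + P) x⟫ := by
  have hPx : 0 ≤ ⟪x, toEuclideanCLM (𝕜 := ℝ) P x⟫ := by
    simpa [inner_toEuclideanCLM] using hP.dotProduct_mulVec_nonneg x
  rw [map_add, map_smul, map_one, _root_.add_apply, inner_add_right, _root_.smul_apply,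
    one_apply_eq_self, real_inner_smul_right, real_inner_self_eq_norm_sq]
  linarith

theorem Matrix.PosSemidef.isUnit_det_smul_one_add {P : Matrix (Fin n) (Fin n) ℝ}
    (hP : P.PosSemidef) {c : ℝ} (hc : 0 < c) : IsUnit (c • 1 + P).det :=
  (isUnit_iff_isUnit_det _).1 ((PosDef.one.smul hc).add_posSemidef hP).isUnit

theorem Matrix.PosSemidef.specNorm_inv_smul_one_add_le {P : Matrix (Fin n) (Fin n) ℝ}
    (hP : P.PosSemidef) {c : ℝ} (hc : 0 < c) : specNorm (c • 1 + P)⁻¹ ≤ c⁻¹ :=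
  specNorm_inv_le_of_coercive (hP.isUnit_det_smul_one_add hc) hc
    (hP.mul_norm_sq_le_inner_smul_one_add c)

theorem frobNorm_nonneg (M : Matrix (Fin n) (Fin n) ℝ) : 0 ≤ frobNorm M :=
  Real.sqrt_nonneg _

theorem frobNorm_sub_comm (M N : Matrix (Fin n) (Fin n) ℝ) :
    frobNorm (M - N) = frobNorm (N - M) := by
  simp only [frobNorm, Matrix.sub_apply, sub_sq_comm]

theorem frobNorm_transpose (M : Matrix (Fin n) (Fin n) ℝ) : frobNorm Mᵀ = frobNorm M := by
  rw [frobNorm, frobNorm, Finset.sum_comm]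
  rfl

theorem frobNorm_sq_eq_sum_norm_col (M : Matrix (Fin n) (Fin n) ℝ) :
    frobNorm M ^ 2 = ∑ j, ‖toLp 2 (fun i => M i j)‖ ^ 2 := by
  rw [frobNorm, Real.sq_sqrt (by positivity), Finset.sum_comm]
  simp [EuclideanSpace.norm_sq_eq]

theorem frobNorm_mul_le_specNorm_mul (M N : Matrix (Fin n) (Fin n) ℝ) :
    frobNorm (M * N) ≤ specNorm M * frobNorm N := by
  rw [← sq_le_sq₀ (frobNorm_nonneg _) (mul_nonneg (specNorm_nonneg M) (frobNorm_nonneg _)), mul_pow,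
    frobNorm_sq_eq_sum_norm_col, frobNorm_sq_eq_sum_norm_col, Finset.mul_sum]
  gcongr with j
  rw [← mul_pow]
  exact pow_le_pow_left₀ (norm_nonneg _) (norm_toLp_mulVec_le M (fun k => N k j)) 2

theorem frobNorm_mul_le_mul_specNorm (M N : Matrix (Fin n) (Fin n) ℝ) :
    frobNorm (M * N) ≤ frobNorm M * specNorm N := by
  rw [← frobNorm_transpose, transpose_mul, mul_comm, ← specNorm_transpose, ← frobNorm_transpose M]
  exact frobNorm_mul_le_specNorm_mul _ _

theorem frobNorm_mul_mul_le (M X N : Matrix (Fin n) (Fin n) ℝ) :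
    frobNorm (M * X * N) ≤ specNorm M * frobNorm X * specNorm N :=
  (frobNorm_mul_le_mul_specNorm _ _).trans
    (mul_le_mul_of_nonneg_right (frobNorm_mul_le_specNorm_mul _ _) (specNorm_nonneg _))

theorem frobNorm_sandwich_smul_one_add_inv_le {S P P' : Matrix (Fin n) (Fin n) ℝ}
    (hP : P.PosSemidef) (hP' : P'.PosSemidef) {c : ℝ} (hc : 0 < c) (X : Matrix (Fin n) (Fin n) ℝ) :
    frobNorm (S * ((c • 1 + P)⁻¹ * X * (c • 1 + P')⁻¹) * S) ≤
      c⁻¹ * c⁻¹ * frobNorm X * (specNorm S * specNorm S) := by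
  have hS := specNorm_nonneg S
  have hX := frobNorm_nonneg X
  have hPinv := hP.specNorm_inv_smul_one_add_le hc
  have hP'inv := hP'.specNorm_inv_smul_one_add_le hc
  calc _ ≤ specNorm S * frobNorm ((c • 1 + P)⁻¹ * X * (c • 1 + P')⁻¹) * specNorm S :=
        frobNorm_mul_mul_le _ _ _
    _ ≤ specNorm S * (specNorm (c • 1 + P)⁻¹ * frobNorm X * specNorm (c • 1 + P')⁻¹) *
          specNorm S := by
        gcongr
        exact frobNorm_mul_mul_le _ _ _
    _ ≤ specNorm S * (c⁻¹ * frobNorm X * c⁻¹) * specNorm S := by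
        gcongr
        exact specNorm_nonneg _
    _ = c⁻¹ * c⁻¹ * frobNorm X * (specNorm S * specNorm S) := by ring

end Norms

theorem stmt_14 {n : ℕ} (Q H Hhat : Matrix (Fin n) (Fin n) ℝ)
    (hQ : Q.PosDef) (hH : H.PosSemidef) (hHhat : Hhat.PosSemidef)
    (l : ℝ) (hl : 0 < l)
    (Γ Γhat : Matrix (Fin n) (Fin n) ℝ)
    (hΓ : Γ = (l ^ 2 • Q⁻¹ + H)⁻¹) (hΓhat : Γhat = (l ^ 2 • Q⁻¹ + Hhat)⁻¹)
    (ω : ℝ)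
    (hω : ω = frobNorm (hQ.posSemidef.sqrt * (H - Hhat) * hQ.posSemidef.sqrt)) :
    frobNorm (Γ - Γhat) ≤ (l ^ 4)⁻¹ * ω * specNorm Q := by
  rw [hQ.posSemidef.sqrt_eq_cfcSqrt] at hω
  set S := CFC.sqrt Q
  have hSS : S * S = Q := CFC.sqrt_mul_sqrt_self Q hQ.posSemidef.nonneg
  have hS : S.IsHermitian := (nonneg_iff_posSemidef.1 (CFC.sqrt_nonneg Q)).1
  have hSdet : IsUnit S.det :=
    (isUnit_iff_isUnit_det S).1 ((CFC.isUnit_sqrt_iff Q hQ.posSemidef.nonneg).2 hQ.isUnit)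
  have hSHS := hH.mul_mul_self_of_isHermitian hS
  have hSHhatS := hHhat.mul_mul_self_of_isHermitian hS
  have hl2 : 0 < l ^ 2 := by positivity
  have hdiff := inv_smul_inv_mul_self_add_sub_inv hSdet (l ^ 2)
    (hSHhatS.isUnit_det_smul_one_add hl2) (hSHS.isUnit_det_smul_one_add hl2)
  rw [hSS, ← hΓ, ← hΓhat] at hdiff
  calc frobNorm (Γ - Γhat) = frobNorm (Γhat - Γ) := frobNorm_sub_comm _ _
    _ ≤ (l ^ 2)⁻¹ * (l ^ 2)⁻¹ * ω * (specNorm S * specNorm S) := by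
        rw [hdiff, hω]
        exact frobNorm_sandwich_smul_one_add_inv_le hSHhatS hSHS hl2 _
    _ = (l ^ 4)⁻¹ * ω * specNorm Q := by
        rw [← hS.specNorm_mul_self, hSS]
        ring
end

section
/- Let Q be symmetric positive definite, λ > 0, V an n×k matrix with Vᵀ Q V = I_k, and T = Bᵀ B for some (k+1)×k matrix B of full column rank. Set Ĥ = V T Vᵀ and Γ̂ = (λ² Q⁻¹ + Ĥ)⁻¹. Then for any vector c ∈ ℝⁿ of the form c = V Bᵀ β e₁ (with β ∈ ℝ and e₁ the first standard basis vector of ℝ^{k+1}), we have Γ̂ c = Q V (T + λ² I_k)⁻¹ Bᵀ β e₁. -/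
/-! The identity `(c Q⁻¹ + V T Vᵀ) Q V = V (T + c I)` follows from `Vᵀ Q V = I` by expanding the
product; inverting both outer factors gives `(c Q⁻¹ + V T Vᵀ)⁻¹ V = Q V (T + c I)⁻¹`, and the
theorem is this identity applied to `Bᵀ β e₁`. Both inverses exist because `c Q⁻¹ + V T Vᵀ` and
`T + c I` are positive definite for `c = λ² > 0`. -/

namespace Matrix

variable {m r : Type*} [Fintype m] [Fintype r] [DecidableEq m]

section CommRing

variable {K : Type*} [DecidableEq r] [CommRing K]

theorem smul_inv_add_mul_mul_transpose_mul_mul (c : K) {Q : Matrix m m K} (hQ : IsUnit Q.det)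
    {V : Matrix m r K} (hV : Vᵀ * Q * V = 1) (T : Matrix r r K) :
    (c • Q⁻¹ + V * T * Vᵀ) * (Q * V) = V * (T + c • 1) := by
  have hV' : Vᵀ * (Q * V) = 1 := by rw [← Matrix.mul_assoc, hV]
  simp only [Matrix.add_mul, Matrix.smul_mul, Matrix.mul_add, Matrix.mul_smul, Matrix.mul_one,
    Matrix.mul_assoc, nonsing_inv_mul_cancel_left _ _ hQ, hV']
  abel

theorem inv_mul_eq_mul_inv_of_mul_eq {M : Matrix m m K} {S : Matrix r r K} (hM : IsUnit M.det)
    (hS : IsUnit S.det) {X V : Matrix m r K} (h : M * X = V * S) : M⁻¹ * V = X * S⁻¹ := by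
  rw [← mul_nonsing_inv_cancel_right S V hS, ← h, Matrix.mul_assoc,
    nonsing_inv_mul_cancel_left _ _ hM]

theorem inv_smul_inv_add_mul_mul_transpose_mul (c : K) {Q : Matrix m m K} (hQ : IsUnit Q.det)
    {V : Matrix m r K} (hV : Vᵀ * Q * V = 1) {T : Matrix r r K}
    (hM : IsUnit (c • Q⁻¹ + V * T * Vᵀ).det) (hS : IsUnit (T + c • 1).det) :
    (c • Q⁻¹ + V * T * Vᵀ)⁻¹ * V = Q * V * (T + c • 1)⁻¹ :=
  inv_mul_eq_mul_inv_of_mul_eq hM hS (smul_inv_add_mul_mul_transpose_mul_mul c hQ hV T)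

end CommRing

theorem PosDef.smul_inv_add_mul_mul_transpose {Q : Matrix m m ℝ} (hQ : Q.PosDef)
    {T : Matrix r r ℝ} (hT : T.PosSemidef) (V : Matrix m r ℝ) {c : ℝ} (hc : 0 < c) :
    (c • Q⁻¹ + V * T * Vᵀ).PosDef := by
  simpa only [conjTranspose_eq_transpose_of_trivial] using
    (hQ.inv.smul hc).add_posSemidef (hT.mul_mul_conjTranspose_same V)

theorem posSemidef_transpose_mul_self {p : Type*} [Fintype p] (A : Matrix p r ℝ) :
    (Aᵀ * A).PosSemidef := by
  simpa only [conjTranspose_eq_transpose_of_trivial] using posSemidef_conjTranspose_mul_self A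

end Matrix

open Matrix in
theorem stmt_18_general {n k : ℕ} (Q : Matrix (Fin n) (Fin n) ℝ) (hQ : Q.PosDef)
    (l : ℝ) (hl : 0 < l)
    (V : Matrix (Fin n) (Fin k) ℝ) (hV : V.transpose * Q * V = 1)
    (B : Matrix (Fin (k + 1)) (Fin k) ℝ)
    (T : Matrix (Fin k) (Fin k) ℝ) (hT : T = B.transpose * B)
    (Hhat : Matrix (Fin n) (Fin n) ℝ) (hHhat : Hhat = V * T * V.transpose)
    (Γhat : Matrix (Fin n) (Fin n) ℝ) (hΓhat : Γhat = (l ^ 2 • Q⁻¹ + Hhat)⁻¹)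
    (β : ℝ) (c : Fin n → ℝ)
    (hc : c = (V * B.transpose).mulVec (β • (Pi.single (0 : Fin (k + 1)) 1 : Fin (k + 1) → ℝ))) :
    Γhat.mulVec c =
      (Q * V * (T + l ^ 2 • (1 : Matrix (Fin k) (Fin k) ℝ))⁻¹ *
        B.transpose).mulVec (β • (Pi.single (0 : Fin (k + 1)) 1 : Fin (k + 1) → ℝ)) := by
  subst hHhat hΓhat hc
  have hl2 : 0 < l ^ 2 := pow_pos hl 2
  have hT_psd : T.PosSemidef := hT ▸ posSemidef_transpose_mul_self B
  have hQ_unit := hQ.isUnit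
  have hM := (hQ.smul_inv_add_mul_mul_transpose hT_psd V hl2).isUnit
  have hS := (PosDef.posSemidef_add hT_psd (PosDef.one.smul hl2)).isUnit
  rw [isUnit_iff_isUnit_det] at hQ_unit hM hS
  rw [mulVec_mulVec, ← Matrix.mul_assoc,
    inv_smul_inv_add_mul_mul_transpose_mul _ hQ_unit hV hM hS]

theorem stmt_18 {n k : ℕ} (Q : Matrix (Fin n) (Fin n) ℝ) (hQ : Q.PosDef)
    (l : ℝ) (hl : 0 < l)
    (V : Matrix (Fin n) (Fin k) ℝ) (hV : V.transpose * Q * V = 1)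
    (B : Matrix (Fin (k + 1)) (Fin k) ℝ) (hB : B.rank = k)
    (T : Matrix (Fin k) (Fin k) ℝ) (hT : T = B.transpose * B)
    (Hhat : Matrix (Fin n) (Fin n) ℝ) (hHhat : Hhat = V * T * V.transpose)
    (Γhat : Matrix (Fin n) (Fin n) ℝ) (hΓhat : Γhat = (l ^ 2 • Q⁻¹ + Hhat)⁻¹)
    (β : ℝ) (c : Fin n → ℝ)
    (hc : c = (V * B.transpose).mulVec (β • (Pi.single (0 : Fin (k + 1)) 1 : Fin (k + 1) → ℝ))) :
    Γhat.mulVec c =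
      (Q * V * (T + l ^ 2 • (1 : Matrix (Fin k) (Fin k) ℝ))⁻¹ *
        B.transpose).mulVec (β • (Pi.single (0 : Fin (k + 1)) 1 : Fin (k + 1) → ℝ)) :=
  stmt_18_general Q hQ l hl V hV B T hT Hhat hHhat Γhat hΓhat β c hc
end
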